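/- Suppose the speed function V is Lipschitz continuous. Let {F_k} ⊆ 𝒫_{m,G} with F_k ⇒ F weakly, and for each k let z*_k ∈ C(𝒯) be the unique solution of z(t) = ∫₀ᵗ V(F_k(S_s(z))) ds, and let z* be the unique solution of z(t) = ∫₀ᵗ V(F(S_s(z))) ds. Then z*_k → z* in the uniform norm on C(𝒯). In other words, the characteristic travel distance is continuous with respect to the in-flow measure when 𝒫_{m,G} carries the weak convergence topology and C(𝒯) the uniform topology. -/

import Mathlib

open MeasureTheory Set Filter

noncomputable section

/-- `Sset Td Xs z t` is the set `S_t(z)` of pairs (departure time, trip length) of the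
agents travelling at time `t` in a system with characteristic travel distance `z`:
`S_t(z) = {(τ, ξ) : τ ∈ [0,t] ∩ 𝒯_d, ξ ∈ (z(t) − z(τ), ∞) ∩ 𝒳}`. -/
def Sset (Td Xs : Set ℝ) (z : ℝ → ℝ) (t : ℝ) : Set (ℝ × ℝ) :=
  {p : ℝ × ℝ | p.1 ∈ Set.Icc 0 t ∩ Td ∧ p.2 ∈ Set.Ioi (z t - z p.1) ∩ Xs}

/-- `memP Td Xs Ta m G F` says that `F ∈ 𝒫_{m,G}`: `F` is a Borel probability measure
on `𝒯_d × 𝒳` with `F(B) ≤ G·λ₂(B)` for every Borel `B` and whose `𝒳`-marginal agrees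
with that of the demand profile `m`, i.e. `F(𝒯_d × Q) = m(Q × 𝒯_a)` for all Borel `Q`. -/
def memP (Td Xs Ta : Set ℝ) (m : Measure (ℝ × ℝ)) (G : ℝ) (F : Measure (ℝ × ℝ)) : Prop :=
  IsProbabilityMeasure F ∧ F ((Td ×ˢ Xs)ᶜ) = 0 ∧
    (∀ B : Set (ℝ × ℝ), MeasurableSet B → F B ≤ ENNReal.ofReal G * volume B) ∧
    ∀ Q : Set ℝ, MeasurableSet Q → F (Td ×ˢ Q) = m (Q ×ˢ Ta)

/-- The map `𝒰(z, F)(t) = ∫₀ᵗ V(F(S_s(z))) ds`. -/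
def Umap (Td Xs : Set ℝ) (V : ℝ → ℝ) (F : Measure (ℝ × ℝ)) (z : ℝ → ℝ) (t : ℝ) : ℝ :=
  ∫ s in (0:ℝ)..t, V ((F (Sset Td Xs z s)).toReal)

/-- The distance associated with the norm `‖u‖_M = sup_{t ∈ [0,Tmax]} e^{−Mt}|u(t)|`. -/
def dM (M Tmax : ℝ) (u w : ℝ → ℝ) : ℝ :=
  ⨆ t : Set.Icc (0:ℝ) Tmax, Real.exp (-(M * t.1)) * |u t.1 - w t.1|

/-!
Both `z*_k` and `z*` are fixed points of `𝒰`, so `z*_k(t) - z*(t)` is the integral of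
`V(F_k(S_s(z*_k))) - V(F(S_s(z*)))`. Since `F_k ≤ G·λ₂` and `S_s(z) ∆ S_s(w)` lies in a band of
width `2 sup_{[0,s]} |z - w|` around a graph, `F_k(S_s(z))` is Lipschitz in `z`, and a Grönwall
argument in the weighted norm `sup_t e^{-Mt} |u(t)|` bounds `‖z*_k - z*‖_∞` by a multiple of
`sup_s |F_k(S_s(z*)) - F(S_s(z*))|`. This tends to zero: pointwise by the portmanteau theorem,
because on the support `𝒯_d × 𝒳` the set `S_s(z*)` agrees with one whose frontier (two vertical
lines and a graph) is Lebesgue-null, and uniformly in `s` because the density bound makes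
`s ↦ F_k(S_s(z*))` equicontinuous.
-/

open scoped symmDiff ENNReal NNReal Topology
open Real

theorem Metric.equicontinuousWithinAt_of_continuity_modulus {ι β α : Type*}
    [TopologicalSpace β] [PseudoMetricSpace α] {F : ι → β → α} {S : Set β} {x₀ : β} (b : β → ℝ)
    (b_lim : Tendsto b (𝓝[S] x₀) (𝓝 0))
    (H : ∀ᶠ x in 𝓝[S] x₀, ∀ i, dist (F i x₀) (F i x) ≤ b x) :
    EquicontinuousWithinAt F S x₀ := by
  intro U hU
  obtain ⟨ε, ε0, hε⟩ := Metric.mem_uniformity_dist.1 hU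
  filter_upwards [b_lim (Iio_mem_nhds ε0), H] with x hx₁ hx₂ i
    using hε ((hx₂ i).trans_lt hx₁)

theorem EquicontinuousOn.tendstoUniformlyOn_of_tendsto {ι X α : Type*} [TopologicalSpace X]
    [UniformSpace α] {F : ι → X → α} {f : X → α} {K : Set X} {l : Filter ι}
    (hK : IsCompact K) (hF : EquicontinuousOn F K)
    (h : ∀ x ∈ K, Tendsto (F · x) l (𝓝 (f x))) : TendstoUniformlyOn F f l K := by
  have := (EquicontinuousOn.tendsto_uniformOnFun_iff_pi' (𝔖 := {K}) (by simpa using hK)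
    (by simpa using hF) l f).2 (tendsto_pi_nhds.2 fun ⟨x, hx⟩ => h x (by simpa using hx))
  exact UniformOnFun.tendsto_iff_tendstoUniformlyOn.1 this K rfl

theorem abs_measureReal_sub_le_of_le_smul {α : Type*} [MeasurableSpace α] {μ ν : Measure α}
    [IsFiniteMeasure μ] {G c : ℝ} (hG : 0 ≤ G) (hc : 0 ≤ c) (hμ : μ ≤ ENNReal.ofReal G • ν)
    {P Q : Set α} (hP : MeasurableSet P) (hQ : MeasurableSet Q)
    (hPQ : ν (P ∆ Q) ≤ ENNReal.ofReal c) :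
    |μ.real P - μ.real Q| ≤ G * c := by
  refine (abs_measureReal_sub_le_measureReal_symmDiff hP.nullMeasurableSet
    hQ.nullMeasurableSet).trans (ENNReal.toReal_le_of_le_ofReal (by positivity) ?_)
  calc μ (P ∆ Q) ≤ ENNReal.ofReal G * ν (P ∆ Q) := hμ _
    _ ≤ ENNReal.ofReal G * ENNReal.ofReal c := by gcongr
    _ = ENNReal.ofReal (G * c) := (ENNReal.ofReal_mul hG).symm

theorem volume_graph_eq_zero {f : ℝ → ℝ} (hf : Measurable f) :
    volume {p : ℝ × ℝ | p.2 = f p.1} = 0 := by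
  rw [Measure.volume_eq_prod, Measure.prod_apply (measurableSet_graph hf)]
  simp [show ∀ τ, Prod.mk τ ⁻¹' {p : ℝ × ℝ | p.2 = f p.1} = {f τ} from fun τ => by ext; simp]

theorem volume_vertical_thickening_graph_le {f : ℝ → ℝ} (hf : Measurable f) {I : Set ℝ}
    (hI : MeasurableSet I) (W : ℝ) :
    volume {p : ℝ × ℝ | p.1 ∈ I ∧ p.2 ∈ Ioc (f p.1 - W) (f p.1 + W)} ≤
      volume I * ENNReal.ofReal (2 * W) := by
  have hsub : {p : ℝ × ℝ | p.1 ∈ I ∧ p.2 ∈ Ioc (f p.1 - W) (f p.1 + W)} ⊆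
      regionBetween (fun τ => f τ - W) (fun τ => f τ + W) I ∪
        {p : ℝ × ℝ | p.2 = f p.1 + W} := by
    rintro p ⟨hpI, hlo, hhi⟩
    rcases hhi.lt_or_eq with hlt | heq
    exacts [Or.inl ⟨hpI, hlo, hlt⟩, Or.inr heq]
  calc _ ≤ _ := measure_mono hsub
    _ ≤ _ := measure_union_le _ _
    _ = volume I * ENNReal.ofReal (2 * W) := by
      rw [volume_graph_eq_zero (f := fun τ => f τ + W) (by fun_prop), add_zero,
        Measure.volume_eq_prod, volume_regionBetween_eq_lintegral' (by fun_prop) (by fun_prop) hI]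
      simp only [Pi.sub_apply, add_sub_sub_cancel, ← two_mul, setLIntegral_const, mul_comm]

theorem integral_mul_exp_add {a M c t : ℝ} (hM : M ≠ 0) :
    ∫ s in (0:ℝ)..t, (a * exp (M * s) + c) = a * ((exp (M * t) - 1) / M) + c * t := by
  rw [intervalIntegral.integral_add (Continuous.intervalIntegrable (by fun_prop) _ _)
    intervalIntegrable_const, intervalIntegral.integral_const_mul,
    intervalIntegral.integral_comp_mul_left exp hM, integral_exp, intervalIntegral.integral_const]
  simp only [mul_zero, exp_zero, smul_eq_mul, sub_zero]
  field_simp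

theorem le_of_le_integral_of_le_mul_sup_add {φ g : ℝ → ℝ} {T K c : ℝ} (hK : 0 ≤ K) (hc : 0 ≤ c)
    (hφ : ContinuousOn φ (Icc 0 T)) (hφ0 : ∀ t ∈ Icc 0 T, 0 ≤ φ t)
    (hg : IntegrableOn g (Icc 0 T))
    (hφg : ∀ t ∈ Icc 0 T, φ t ≤ ∫ s in (0:ℝ)..t, g s)
    (hgφ : ∀ s ∈ Icc 0 T, ∀ D, (∀ τ ∈ Icc 0 s, φ τ ≤ D) → g s ≤ K * D + c) :
    ∀ t ∈ Icc 0 T, φ t ≤ 2 * c * T * exp ((2 * K + 1) * T) := by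
  intro t₁ ht₁
  -- In the weighted sup `d` of `e^{-Mt} φ t`, the memory term `K ∫₀ᵗ e^{Ms} d ds` costs at most
  -- `K d / M ≤ d / 2`, which is what makes the estimate close.
  set M := 2 * K + 1
  have hM0 : 0 < M := by positivity
  obtain ⟨t₀, ht₀, hmax⟩ := isCompact_Icc.exists_isMaxOn ⟨t₁, ht₁⟩
    ((continuous_exp.comp (by fun_prop : Continuous fun t : ℝ => -(M * t))).continuousOn.mul hφ)
  set d := exp (-(M * t₀)) * φ t₀
  have hd0 : 0 ≤ d := mul_nonneg (exp_nonneg _) (hφ0 t₀ ht₀)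
  have hφd : ∀ τ ∈ Icc 0 T, φ τ ≤ exp (M * τ) * d := fun τ hτ => by
    have hτd : exp (-(M * τ)) * φ τ ≤ d := hmax hτ
    calc φ τ = exp (M * τ) * (exp (-(M * τ)) * φ τ) := by
          rw [← mul_assoc, ← exp_add, add_neg_cancel, exp_zero, one_mul]
      _ ≤ exp (M * τ) * d := mul_le_mul_of_nonneg_left hτd (exp_nonneg _)
  have hweighted : ∀ t ∈ Icc 0 T, exp (-(M * t)) * φ t ≤ d / 2 + c * T := by
    intro t ht
    have hgt : ∀ s ∈ Icc 0 t, g s ≤ K * d * exp (M * s) + c := fun s hs => by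
      have hsT : s ∈ Icc 0 T := ⟨hs.1, hs.2.trans ht.2⟩
      calc g s ≤ K * (exp (M * s) * d) + c := hgφ s hsT _ fun τ hτ =>
            (hφd τ ⟨hτ.1, hτ.2.trans hsT.2⟩).trans (by gcongr; exact hτ.2)
        _ = K * d * exp (M * s) + c := by ring
    have hφt : φ t ≤ K * d * ((exp (M * t) - 1) / M) + c * t := calc
      φ t ≤ ∫ s in (0:ℝ)..t, g s := hφg t ht
      _ ≤ ∫ s in (0:ℝ)..t, (K * d * exp (M * s) + c) := by
        refine intervalIntegral.integral_mono_on ht.1 ?_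
          (Continuous.intervalIntegrable (by fun_prop) _ _) hgt
        exact (intervalIntegrable_iff_integrableOn_Icc_of_le ht.1).2
          (hg.mono_set (Icc_subset_Icc le_rfl ht.2))
      _ = K * d * ((exp (M * t) - 1) / M) + c * t := integral_mul_exp_add hM0.ne'
    have hKM : K * d / M ≤ d / 2 := by
      rw [div_le_div_iff₀ hM0 two_pos]; nlinarith
    have he : exp (-(M * t)) ≤ 1 := exp_le_one_iff.2 (by nlinarith [ht.1])
    calc exp (-(M * t)) * φ t
        ≤ exp (-(M * t)) * (K * d * ((exp (M * t) - 1) / M) + c * t) := by gcongr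
      _ = K * d / M * (1 - exp (-(M * t))) + exp (-(M * t)) * (c * t) := by
        rw [exp_neg]; field_simp
      _ ≤ K * d / M + c * T := by
        have h1 : K * d / M * (1 - exp (-(M * t))) ≤ K * d / M := by
          have : 0 ≤ K * d / M := by positivity
          nlinarith [exp_pos (-(M * t))]
        have h2 : exp (-(M * t)) * (c * t) ≤ 1 * (c * T) :=
          mul_le_mul he (by gcongr; exact ht.2) (by nlinarith [ht.1]) zero_le_one
        linarith
      _ ≤ d / 2 + c * T := by linarith
  have hd : d ≤ 2 * c * T := by linarith [hweighted t₀ ht₀]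
  calc φ t₁ ≤ exp (M * t₁) * d := hφd t₁ ht₁
    _ ≤ exp (M * T) * (2 * c * T) := by gcongr; exact ht₁.2
    _ = 2 * c * T * exp ((2 * K + 1) * T) := by ring

section Sset

variable {Td Xs : Set ℝ}

theorem measurableSet_Sset (hTd : MeasurableSet Td) (hXs : MeasurableSet Xs) {z : ℝ → ℝ}
    (hz : Measurable z) (s : ℝ) : MeasurableSet (Sset Td Xs z s) :=
  (measurable_fst (measurableSet_Icc.inter hTd)).inter
    ((measurableSet_lt (by fun_prop) measurable_snd).inter (measurable_snd hXs))

theorem Sset_eq_inter (z : ℝ → ℝ) (s : ℝ) :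
    Sset Td Xs z s = Sset univ univ z s ∩ Td ×ˢ Xs := by
  ext p
  simp only [Sset, mem_inter_iff, mem_ofPred_eq, mem_prod, mem_univ, and_true]
  tauto

theorem measure_Sset_eq_of_measure_compl_eq_zero {μ : Measure (ℝ × ℝ)}
    (hμ : μ (Td ×ˢ Xs)ᶜ = 0) (z : ℝ → ℝ) (s : ℝ) :
    μ (Sset Td Xs z s) = μ (Sset univ univ z s) := by
  rw [Sset_eq_inter, measure_inter_conull hμ]

theorem volume_frontier_Sset_univ {z : ℝ → ℝ} (hz : Continuous z) (s : ℝ) :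
    volume (frontier (Sset univ univ z s)) = 0 := by
  have hS : Sset univ univ z s = Prod.fst ⁻¹' Icc 0 s ∩ {p | z s - z p.1 < p.2} := by
    ext p; simp [Sset]
  have hIcc : frontier (Icc (0:ℝ) s) ⊆ {0, s} := by
    rw [frontier, closure_Icc, interior_Icc]
    rintro x ⟨⟨h0, hs⟩, hx⟩
    rcases h0.lt_or_eq with h0 | rfl
    · exact Or.inr (hs.eq_of_not_lt fun h => hx ⟨h0, h⟩)
    · exact Or.inl rfl
  have hsub : frontier (Sset univ univ z s) ⊆
      ({0, s} : Set ℝ) ×ˢ univ ∪ {p : ℝ × ℝ | p.2 = z s - z p.1} := by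
    rw [hS]
    refine (frontier_inter_subset _ _).trans (union_subset_union ?_ ?_)
    · rw [← isOpenMap_fst.preimage_frontier_eq_frontier_preimage continuous_fst]
      exact inter_subset_left.trans fun p hp => ⟨hIcc hp, trivial⟩
    · exact inter_subset_right.trans ((frontier_lt_subset_eq (by fun_prop) continuous_snd).trans
        fun p hp => hp.symm)
  refine measure_mono_null hsub (measure_union_null ?_
    (volume_graph_eq_zero (f := fun τ => z s - z τ) (by fun_prop)))
  rw [Measure.volume_eq_prod, Measure.prod_prod]
  simp [Set.Finite.measure_zero]

theorem Sset_symmDiff_subset {z w : ℝ → ℝ} {s' s W : ℝ} (hss : s' ≤ s)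
    (hzw : ∀ τ ∈ Icc 0 s', |(z s - z τ) - (w s' - w τ)| ≤ W) :
    Sset Td Xs z s ∆ Sset Td Xs w s' ⊆
      Ioc s' s ×ˢ Xs ∪ {p | p.1 ∈ Icc 0 s' ∧ p.2 ∈ Ioc (z s - z p.1 - W) (z s - z p.1 + W)} := by
  rintro p (⟨⟨⟨⟨h0, hps⟩, hTd⟩, hz, hX⟩, hnot⟩ | ⟨⟨⟨⟨h0, hps'⟩, hTd⟩, hw, hX⟩, hnot⟩)
  · rcases le_or_gt p.1 s' with hps' | hps'
    · have hτ := abs_le.1 (hzw p.1 ⟨h0, hps'⟩)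
      have : p.2 ≤ w s' - w p.1 := not_lt.1 fun h => hnot ⟨⟨⟨h0, hps'⟩, hTd⟩, h, hX⟩
      exact Or.inr ⟨⟨h0, hps'⟩, by simp only [mem_Ioi] at hz; linarith, by linarith⟩
    · exact Or.inl ⟨⟨hps', hps⟩, hX⟩
  · have hτ := abs_le.1 (hzw p.1 ⟨h0, hps'⟩)
    have : p.2 ≤ z s - z p.1 := not_lt.1 fun h => hnot ⟨⟨⟨h0, hps'.trans hss⟩, hTd⟩, h, hX⟩
    exact Or.inr ⟨⟨h0, hps'⟩, by simp only [mem_Ioi] at hw; linarith, by linarith⟩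

theorem volume_Sset_symmDiff_le {Xmin Xmax : ℝ} (hX : Xmin ≤ Xmax) {z w : ℝ → ℝ}
    (hz : Measurable z) {s' s W : ℝ} (hs' : 0 ≤ s') (hss : s' ≤ s)
    (hzw : ∀ τ ∈ Icc 0 s', |(z s - z τ) - (w s' - w τ)| ≤ W) :
    volume (Sset Td (Icc Xmin Xmax) z s ∆ Sset Td (Icc Xmin Xmax) w s') ≤
      ENNReal.ofReal ((s - s') * (Xmax - Xmin) + s' * (2 * W)) := by
  have hW : 0 ≤ W := (abs_nonneg _).trans (hzw 0 ⟨le_rfl, hs'⟩)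
  calc volume (Sset Td (Icc Xmin Xmax) z s ∆ Sset Td (Icc Xmin Xmax) w s')
      ≤ volume (Ioc s' s ×ˢ Icc Xmin Xmax ∪
          {p | p.1 ∈ Icc 0 s' ∧ p.2 ∈ Ioc (z s - z p.1 - W) (z s - z p.1 + W)}) :=
        measure_mono (Sset_symmDiff_subset hss hzw)
    _ ≤ volume (Ioc s' s ×ˢ Icc Xmin Xmax) +
        volume {p : ℝ × ℝ | p.1 ∈ Icc 0 s' ∧ p.2 ∈ Ioc (z s - z p.1 - W) (z s - z p.1 + W)} :=
        measure_union_le _ _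
    _ ≤ volume (Ioc s' s ×ˢ Icc Xmin Xmax) + volume (Icc 0 s') * ENNReal.ofReal (2 * W) :=
      add_le_add_right (volume_vertical_thickening_graph_le (f := fun τ => z s - z τ)
        (by fun_prop) measurableSet_Icc W) _
    _ = ENNReal.ofReal ((s - s') * (Xmax - Xmin) + s' * (2 * W)) := by
      rw [Measure.volume_eq_prod, Measure.prod_prod, Real.volume_Ioc, Real.volume_Icc,
        Real.volume_Icc, ← ENNReal.ofReal_mul (by linarith),
        ← ENNReal.ofReal_mul (by simpa using hs'),
        ← ENNReal.ofReal_add (by nlinarith) (by positivity), sub_zero]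

theorem tendsto_measureReal_Sset {ι : Type*} {l : Filter ι}
    {μs : ι → ProbabilityMeasure (ℝ × ℝ)} {μ : ProbabilityMeasure (ℝ × ℝ)}
    (hconv : Tendsto μs l (𝓝 μ)) (hμs : ∀ i, (μs i : Measure (ℝ × ℝ)) (Td ×ˢ Xs)ᶜ = 0)
    (hμ : (μ : Measure (ℝ × ℝ)) (Td ×ˢ Xs)ᶜ = 0) (hμac : (μ : Measure (ℝ × ℝ)) ≪ volume)
    {z : ℝ → ℝ} (hz : Continuous z) (s : ℝ) :
    Tendsto (fun i => (μs i : Measure (ℝ × ℝ)).real (Sset Td Xs z s)) l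
      (𝓝 ((μ : Measure (ℝ × ℝ)).real (Sset Td Xs z s))) := by
  simp only [measureReal_def, measure_Sset_eq_of_measure_compl_eq_zero hμ,
    measure_Sset_eq_of_measure_compl_eq_zero (hμs _)]
  exact (ENNReal.tendsto_toReal (measure_ne_top _ _)).comp
    (ProbabilityMeasure.tendsto_measure_of_null_frontier_of_tendsto' hconv
      (hμac (volume_frontier_Sset_univ hz s)))

end Sset

section SsetMeasure

variable {Td : Set ℝ} (hTd : MeasurableSet Td) {Xmin Xmax G : ℝ} (hX : Xmin ≤ Xmax) (hG : 0 ≤ G)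
include hTd hX hG

theorem abs_measureReal_Sset_sub_le {μ : Measure (ℝ × ℝ)} [IsFiniteMeasure μ]
    (hμ : μ ≤ ENNReal.ofReal G • volume) {z w : ℝ → ℝ} (hz : Measurable z) (hw : Measurable w)
    {s' s W : ℝ} (hs' : 0 ≤ s') (hss : s' ≤ s)
    (hzw : ∀ τ ∈ Icc 0 s', |(z s - z τ) - (w s' - w τ)| ≤ W) :
    |μ.real (Sset Td (Icc Xmin Xmax) z s) - μ.real (Sset Td (Icc Xmin Xmax) w s')| ≤
      G * ((s - s') * (Xmax - Xmin) + s' * (2 * W)) := by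
  have hW : 0 ≤ W := (abs_nonneg _).trans (hzw 0 ⟨le_rfl, hs'⟩)
  exact abs_measureReal_sub_le_of_le_smul hG (by nlinarith) hμ
    (measurableSet_Sset hTd measurableSet_Icc hz s)
    (measurableSet_Sset hTd measurableSet_Icc hw s') (volume_Sset_symmDiff_le hX hz hs' hss hzw)

theorem abs_measureReal_Sset_time_sub_le {μ : Measure (ℝ × ℝ)} [IsFiniteMeasure μ]
    (hμ : μ ≤ ENNReal.ofReal G • volume) {z : ℝ → ℝ} (hz : Measurable z) {T s' s : ℝ}
    (hs' : s' ∈ Icc 0 T) (hs : s ∈ Icc 0 T) :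
    |μ.real (Sset Td (Icc Xmin Xmax) z s') - μ.real (Sset Td (Icc Xmin Xmax) z s)| ≤
      G * (|s' - s| * (Xmax - Xmin) + T * (2 * |z s' - z s|)) := by
  wlog hss : s' ≤ s generalizing s' s
  · simpa only [abs_sub_comm] using this hs hs' (le_of_not_ge hss)
  rw [abs_sub_comm, abs_sub_comm s', abs_sub_comm (z s'), abs_of_nonneg (sub_nonneg.2 hss)]
  refine (abs_measureReal_Sset_sub_le hTd hX hG hμ hz hz hs'.1 hss fun τ _ => by
    rw [sub_sub_sub_cancel_right]).trans ?_
  gcongr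
  exact hs'.2

theorem abs_measureReal_Sset_sub_le_of_abs_sub_le {μ : Measure (ℝ × ℝ)} [IsFiniteMeasure μ]
    (hμ : μ ≤ ENNReal.ofReal G • volume) {z w : ℝ → ℝ} (hz : Measurable z) (hw : Measurable w)
    {s D : ℝ} (hs : 0 ≤ s) (hzw : ∀ τ ∈ Icc 0 s, |z τ - w τ| ≤ D) :
    |μ.real (Sset Td (Icc Xmin Xmax) z s) - μ.real (Sset Td (Icc Xmin Xmax) w s)| ≤
      4 * G * s * D := by
  have h := abs_measureReal_Sset_sub_le hTd hX hG hμ hz hw hs le_rfl (W := 2 * D) fun τ hτ => by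
    calc |(z s - z τ) - (w s - w τ)| = |(z s - w s) - (z τ - w τ)| := by ring_nf
      _ ≤ |z s - w s| + |z τ - w τ| := abs_sub _ _
      _ ≤ 2 * D := by linarith [hzw s ⟨hs, le_rfl⟩, hzw τ hτ]
  linarith

theorem equicontinuousOn_measureReal_Sset {ι : Type*} {μ : ι → Measure (ℝ × ℝ)}
    [∀ i, IsFiniteMeasure (μ i)] (hμ : ∀ i, μ i ≤ ENNReal.ofReal G • volume) {z : ℝ → ℝ}
    (hz : Continuous z) (T : ℝ) :
    EquicontinuousOn (fun i s => (μ i).real (Sset Td (Icc Xmin Xmax) z s)) (Icc 0 T) := by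
  intro s₀ hs₀
  refine Metric.equicontinuousWithinAt_of_continuity_modulus
    (fun s => G * (|s₀ - s| * (Xmax - Xmin) + T * (2 * |z s₀ - z s|))) ?_
    (eventually_nhdsWithin_of_forall fun s hs i =>
      abs_measureReal_Sset_time_sub_le hTd hX hG (hμ i) hz.measurable hs₀ hs)
  exact (Continuous.tendsto' (by fun_prop) s₀ 0 (by simp)).mono_left nhdsWithin_le_nhds

theorem continuousOn_measureReal_Sset {μ : Measure (ℝ × ℝ)} [IsFiniteMeasure μ]
    (hμ : μ ≤ ENNReal.ofReal G • volume) {z : ℝ → ℝ} (hz : Continuous z) (T : ℝ) :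
    ContinuousOn (fun s => μ.real (Sset Td (Icc Xmin Xmax) z s)) (Icc 0 T) :=
  (equicontinuousOn_measureReal_Sset hTd hX hG (μ := fun _ : Unit => μ) (fun _ => hμ) hz T
    ).continuousOn ()

theorem tendstoUniformlyOn_measureReal_Sset {ι : Type*} {l : Filter ι}
    {μs : ι → ProbabilityMeasure (ℝ × ℝ)} {μ : ProbabilityMeasure (ℝ × ℝ)}
    (hconv : Tendsto μs l (𝓝 μ))
    (hμs : ∀ i, (μs i : Measure (ℝ × ℝ)) ≤ ENNReal.ofReal G • volume)
    (hμ : (μ : Measure (ℝ × ℝ)) ≤ ENNReal.ofReal G • volume)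
    (hμsK : ∀ i, (μs i : Measure (ℝ × ℝ)) (Td ×ˢ Icc Xmin Xmax)ᶜ = 0)
    (hμK : (μ : Measure (ℝ × ℝ)) (Td ×ˢ Icc Xmin Xmax)ᶜ = 0) {z : ℝ → ℝ} (hz : Continuous z)
    (T : ℝ) :
    TendstoUniformlyOn (fun i s => (μs i : Measure (ℝ × ℝ)).real (Sset Td (Icc Xmin Xmax) z s))
      (fun s => (μ : Measure (ℝ × ℝ)).real (Sset Td (Icc Xmin Xmax) z s)) l (Icc 0 T) :=
  (equicontinuousOn_measureReal_Sset hTd hX hG hμs hz T).tendstoUniformlyOn_of_tendsto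
    isCompact_Icc fun s _ => tendsto_measureReal_Sset hconv hμsK hμK
      (Measure.absolutelyContinuous_of_le_smul hμ) hz s

theorem abs_sub_le_of_eq_Umap {T : ℝ} (hT : 0 ≤ T) {V : ℝ → ℝ} {LV : ℝ≥0}
    (hV : LipschitzOnWith LV V (Ici 0)) {μ' μ : Measure (ℝ × ℝ)} [IsFiniteMeasure μ']
    [IsFiniteMeasure μ] (hμ' : μ' ≤ ENNReal.ofReal G • volume)
    (hμ : μ ≤ ENNReal.ofReal G • volume) {z' z : ℝ → ℝ} (hz' : Continuous z') (hz : Continuous z)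
    (hz'U : ∀ t ∈ Icc 0 T, z' t = Umap Td (Icc Xmin Xmax) V μ' z' t)
    (hzU : ∀ t ∈ Icc 0 T, z t = Umap Td (Icc Xmin Xmax) V μ z t) {η : ℝ} (hη : 0 ≤ η)
    (hclose : ∀ s ∈ Icc 0 T,
      |μ'.real (Sset Td (Icc Xmin Xmax) z s) - μ.real (Sset Td (Icc Xmin Xmax) z s)| ≤ η) :
    ∀ t ∈ Icc 0 T, |z' t - z t| ≤ 2 * LV * T * exp ((8 * LV * G * T + 1) * T) * η := by
  set h' := fun s => V (μ'.real (Sset Td (Icc Xmin Xmax) z' s))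
  set h := fun s => V (μ.real (Sset Td (Icc Xmin Xmax) z s))
  have hVS : ∀ (ν : Measure (ℝ × ℝ)) [IsFiniteMeasure ν], ν ≤ ENNReal.ofReal G • volume →
      ∀ w : ℝ → ℝ, Continuous w →
        ContinuousOn (fun s => V (ν.real (Sset Td (Icc Xmin Xmax) w s))) (Icc 0 T) :=
    fun ν _ hν w hw => hV.continuousOn.comp (continuousOn_measureReal_Sset hTd hX hG hν hw T)
      fun _ _ => measureReal_nonneg
  have hh' : ContinuousOn h' (Icc 0 T) := hVS μ' hμ' z' hz'
  have hh : ContinuousOn h (Icc 0 T) := hVS μ hμ z hz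
  intro t ht
  refine (le_of_le_integral_of_le_mul_sup_add (φ := fun t => |z' t - z t|)
    (g := fun s => |h' s - h s|) (K := LV * (4 * G * T)) (c := LV * η) (by positivity)
    (by positivity) (hz'.sub hz).abs.continuousOn (fun _ _ => abs_nonneg _)
    (hh'.sub hh).abs.integrableOn_Icc ?_ ?_ t ht).trans_eq (by ring_nf)
  · intro t ht
    have hsub : Icc 0 t ⊆ Icc 0 T := Icc_subset_Icc le_rfl ht.2
    change |z' t - z t| ≤ _
    rw [hz'U t ht, hzU t ht]
    change |(∫ s in (0:ℝ)..t, h' s) - ∫ s in (0:ℝ)..t, h s| ≤ _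
    rw [← intervalIntegral.integral_sub ((hh'.mono hsub).intervalIntegrable_of_Icc ht.1)
      ((hh.mono hsub).intervalIntegrable_of_Icc ht.1)]
    exact intervalIntegral.abs_integral_le_integral_abs ht.1
  · intro s hs D hD
    have hD0 : 0 ≤ D := (abs_nonneg _).trans (hD 0 ⟨le_rfl, hs.1⟩)
    have hpath := abs_measureReal_Sset_sub_le_of_abs_sub_le hTd hX hG hμ' hz'.measurable
      hz.measurable hs.1 hD
    calc |h' s - h s|
        ≤ LV * |μ'.real (Sset Td (Icc Xmin Xmax) z' s) -
            μ.real (Sset Td (Icc Xmin Xmax) z s)| := by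
          simpa only [Real.dist_eq] using hV.dist_le_mul _ measureReal_nonneg _ measureReal_nonneg
      _ ≤ LV * (4 * G * s * D + η) := by
          gcongr
          exact (abs_sub_le _ _ _).trans (add_le_add hpath (hclose s hs))
      _ ≤ LV * (4 * G * T) * D + LV * η := by
          have : 4 * G * s * D ≤ 4 * G * T * D := by gcongr; exact hs.2
          nlinarith [LV.coe_nonneg]

end SsetMeasure

theorem memP.le_smul_volume {Td Xs Ta : Set ℝ} {m : Measure (ℝ × ℝ)} {G : ℝ}
    {F : Measure (ℝ × ℝ)} (hF : memP Td Xs Ta m G F) : F ≤ ENNReal.ofReal G • volume :=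
  Measure.le_iff.2 fun B hB => by simpa using hF.2.2.1 B hB

theorem characteristic_travel_distance_continuous_in_F_general
    (Tmax Xmin Xmax G : ℝ) (hT : 0 < Tmax) (hXX : Xmin < Xmax)
    (hG : 0 < G)
    (Td Ta : Set ℝ) (hTdc : IsCompact Td)
    (m : Measure (ℝ × ℝ))
    (V : ℝ → ℝ) (LV : NNReal) (hV : LipschitzOnWith LV V (Set.Ici 0))
    (Fk : ℕ → ProbabilityMeasure (ℝ × ℝ)) (F : ProbabilityMeasure (ℝ × ℝ))
    (hFk : ∀ k, memP Td (Set.Icc Xmin Xmax) Ta m G (Fk k : Measure (ℝ × ℝ)))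
    (hFmem : memP Td (Set.Icc Xmin Xmax) Ta m G (F : Measure (ℝ × ℝ)))
    (hconv : Filter.Tendsto Fk Filter.atTop (nhds F))
    (zk : ℕ → ℝ → ℝ) (zs : ℝ → ℝ)
    (hzk : ∀ k, Continuous (zk k))
    (hzkfix : ∀ k, ∀ t ∈ Set.Icc (0:ℝ) Tmax,
      zk k t = Umap Td (Set.Icc Xmin Xmax) V (Fk k : Measure (ℝ × ℝ)) (zk k) t)
    (hzs : Continuous zs)
    (hzsfix : ∀ t ∈ Set.Icc (0:ℝ) Tmax,
      zs t = Umap Td (Set.Icc Xmin Xmax) V (F : Measure (ℝ × ℝ)) zs t) :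
    TendstoUniformlyOn (fun k => zk k) zs Filter.atTop (Set.Icc (0:ℝ) Tmax) := by
  have hTd := hTdc.isClosed.measurableSet
  have hunif := tendstoUniformlyOn_measureReal_Sset hTd hXX.le hG.le hconv
    (fun k => (hFk k).le_smul_volume) hFmem.le_smul_volume (fun k => (hFk k).2.1) hFmem.2.1 hzs Tmax
  rw [Metric.tendstoUniformlyOn_iff] at hunif ⊢
  intro ε hε
  set C := 2 * LV * Tmax * exp ((8 * LV * G * Tmax + 1) * Tmax)
  have hC : 0 ≤ C := by positivity
  filter_upwards [hunif (ε / (C + 1)) (by positivity)] with k hk t ht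
  have hbound := abs_sub_le_of_eq_Umap hTd hXX.le hG.le hT.le hV (hFk k).le_smul_volume
    hFmem.le_smul_volume (hzk k) hzs (hzkfix k) hzsfix (η := ε / (C + 1)) (by positivity)
    (fun s hs => by simpa only [Real.dist_eq, abs_sub_comm] using (hk s hs).le) t ht
  rw [dist_comm, Real.dist_eq]
  calc |zk k t - zs t| ≤ C * (ε / (C + 1)) := hbound
    _ < ε := by
      rw [mul_div_assoc', div_lt_iff₀ (by positivity)]
      linarith

/-- Proposition 4: continuity of the characteristic travel distance
with respect to the in-flow measure. If `V` is Lipschitz, `F_k ∈ 𝒫_{m,G}` converge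
weakly to `F ∈ 𝒫_{m,G}`, and `z*_k, z*` are the corresponding characteristic travel
distances, then `z*_k → z*` uniformly on `𝒯`. -/
theorem characteristic_travel_distance_continuous_in_F
    (Tmax Xmin Xmax G : ℝ) (hT : 0 < Tmax) (hXmin : 0 < Xmin) (hXX : Xmin < Xmax)
    (hG : 0 < G)
    (Td Ta : Set ℝ) (hTdc : IsCompact Td) (hTd : Td ⊆ Set.Icc 0 Tmax)
    (hTac : IsCompact Ta) (hTa : Ta ⊆ Set.Icc 0 Tmax)
    (m : Measure (ℝ × ℝ)) (hm : IsProbabilityMeasure m)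
    (V : ℝ → ℝ) (LV : NNReal) (hV : LipschitzOnWith LV V (Set.Ici 0))
    (hVpos : ∀ c : ℝ, 0 ≤ c → 0 < V c)
    (Fk : ℕ → ProbabilityMeasure (ℝ × ℝ)) (F : ProbabilityMeasure (ℝ × ℝ))
    (hFk : ∀ k, memP Td (Set.Icc Xmin Xmax) Ta m G (Fk k : Measure (ℝ × ℝ)))
    (hFmem : memP Td (Set.Icc Xmin Xmax) Ta m G (F : Measure (ℝ × ℝ)))
    (hconv : Filter.Tendsto Fk Filter.atTop (nhds F))
    (zk : ℕ → ℝ → ℝ) (zs : ℝ → ℝ)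
    (hzk : ∀ k, Continuous (zk k))
    (hzkfix : ∀ k, ∀ t ∈ Set.Icc (0:ℝ) Tmax,
      zk k t = Umap Td (Set.Icc Xmin Xmax) V (Fk k : Measure (ℝ × ℝ)) (zk k) t)
    (hzs : Continuous zs)
    (hzsfix : ∀ t ∈ Set.Icc (0:ℝ) Tmax,
      zs t = Umap Td (Set.Icc Xmin Xmax) V (F : Measure (ℝ × ℝ)) zs t) :
    TendstoUniformlyOn (fun k => zk k) zs Filter.atTop (Set.Icc (0:ℝ) Tmax) :=
  characteristic_travel_distance_continuous_in_F_general Tmax Xmin Xmax G hT hXX hG Td Ta hTdc m V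
    LV hV Fk F hFk hFmem hconv zk zs hzk hzkfix hzs hzsfix
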